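/- The generalized Stirling numbers of the first kind and the generalized r-Whitney numbers of the first kind are related by m^{n-i}·s_α(n,i) = Σ_{k=i}^{n} C(k,i)·r^{k-i}·w_{m,r;α}(n,k) for 0 ≤ i ≤ n. -/

import Mathlib

/-! Both sides are coefficients of one polynomial identity in `x`: the `i`-th coefficient of
`m ^ n * ∏ (X - α j) = ∑ w n k * (m * X + r) ^ k` is `m ^ n * s n i` on the left and, by the
binomial theorem, `m ^ i * ∑ C(k, i) * r ^ (k - i) * w n k` on the right; cancel `m ^ i`. -/

open Finset Polynomial

section Coefficients

variable {R : Type*} [CommSemiring R]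

theorem coeff_sum_range_C_mul_X_pow (c : ℕ → R) {n i : ℕ} (hi : i ≤ n) :
    (∑ j ∈ range (n + 1), C (c j) * X ^ j).coeff i = c i := by
  simp [Nat.lt_succ_of_le hi]

theorem coeff_C_mul_X_add_C_pow (a b : R) (k i : ℕ) :
    ((C a * X + C b) ^ k).coeff i = a ^ i * b ^ (k - i) * k.choose i := by
  have hcomp : (C a * X + C b) ^ k = ((X + C b) ^ k).comp (C a * X) := by
    simp [pow_comp]
  rw [hcomp, comp_C_mul_X_coeff, coeff_X_add_C_pow]
  ring

theorem coeff_sum_range_C_mul_C_mul_X_add_C_pow (d : ℕ → R) (a b : R) (n i : ℕ) :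
    (∑ k ∈ range (n + 1), C (d k) * (C a * X + C b) ^ k).coeff i =
      a ^ i * ∑ k ∈ Icc i n, (k.choose i : R) * b ^ (k - i) * d k := by
  have hsupport : ∑ k ∈ Icc i n, d k * (a ^ i * b ^ (k - i) * k.choose i) =
      ∑ k ∈ range (n + 1), d k * (a ^ i * b ^ (k - i) * k.choose i) := by
    refine sum_subset (fun k hk => ?_) (fun k _ hk => ?_)
    · simp only [mem_Icc, mem_range] at hk ⊢
      omega
    · have hki : k < i := by
        simp only [mem_Icc, mem_range] at *
        omega
      simp [Nat.choose_eq_zero_of_lt hki]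
  simp only [finsetSum_coeff, coeff_C_mul, coeff_C_mul_X_add_C_pow, ← hsupport, mul_sum]
  exact sum_congr rfl fun k _ => by ring

end Coefficients

theorem stmt_14 (m r : ℝ) (hm : m ≠ 0) (α : ℕ → ℝ)
    (s : ℕ → ℕ → ℝ) (w : ℕ → ℕ → ℝ)
    (hs : ∀ n : ℕ, ∀ x : ℝ, ∏ i ∈ range n, (x - α i) =
      ∑ i ∈ range (n + 1), s n i * x ^ i)
    (hw : ∀ n : ℕ, ∀ x : ℝ, m ^ n * ∏ i ∈ range n, (x - α i) =
      ∑ k ∈ range (n + 1), w n k * (m * x + r) ^ k) :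
    ∀ n i : ℕ, i ≤ n →
      m ^ (n - i) * s n i = ∑ k ∈ Icc i n, (k.choose i : ℝ) * r ^ (k - i) * w n k := by
  intro n i hi
  have hpoly : C (m ^ n) * ∑ j ∈ range (n + 1), C (s n j) * X ^ j =
      ∑ k ∈ range (n + 1), C (w n k) * (C m * X + C r) ^ k :=
    Polynomial.funext fun x => by simpa [eval_finsetSum, ← hs] using hw n x
  have hcoeff := congrArg (coeff · i) hpoly
  simp only [coeff_C_mul, coeff_sum_range_C_mul_X_pow _ hi,
    coeff_sum_range_C_mul_C_mul_X_add_C_pow] at hcoeff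
  apply mul_left_cancel₀ (pow_ne_zero i hm)
  rw [← hcoeff, ← mul_assoc, ← pow_add, Nat.add_sub_cancel' hi]
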